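/- arXiv:1811.08077 — 3 statements merged into one kernel-verified Lean document; each statement's English description precedes it below -/
import Mathlib

section
/- Let T be a left linear track category with linearity tracks Γ satisfying the linearity track equations, and define Γ(n)_a := Γ_a^{1,…,1} : a(n·1) ⇒ n·a for n ≥ 1 (iterated linearity track at n copies of the identity). Then for all m, n ≥ 1 and any morphism a : A → B, Γ(mn)_a = (m·1_B) Γ(n)_a ∘ Γ(m)_a (n·1_A). -/
/-! A *left linear track category*: a track category (category enriched in groupoids)
whose hom-groupoids are abelian group objects in groupoids, with strictly left linear
composition (and pointed).  Tracks are encoded non-dependently, with source `src = δ₀`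
and target `tgt = δ₁`; `vcomp α β` is the vertical composite `α □ β` (first `β`, then `α`);
`wl a α = a ⊗ α` and `wr α x = α ⊗ x` are the whiskerings. -/
structure LLTrackCat (Obj : Type u) (Hom : Obj → Obj → Type v) (Trk : Obj → Obj → Type w)
    [∀ A B : Obj, AddCommGroup (Hom A B)] [∀ A B : Obj, AddCommGroup (Trk A B)] where
  src : ∀ {A B : Obj}, Trk A B → Hom A B
  tgt : ∀ {A B : Obj}, Trk A B → Hom A B
  vid : ∀ {A B : Obj}, Hom A B → Trk A B
  vcomp : ∀ {A B : Obj}, Trk A B → Trk A B → Trk A B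
  vinv : ∀ {A B : Obj}, Trk A B → Trk A B
  one : ∀ A : Obj, Hom A A
  comp : ∀ {A B C : Obj}, Hom B C → Hom A B → Hom A C
  wl : ∀ {A B C : Obj}, Hom B C → Trk A B → Trk A C
  wr : ∀ {A B C : Obj}, Trk B C → Hom A B → Trk A C
  -- each hom-groupoid is a groupoid
  src_vid : ∀ {A B : Obj} (x : Hom A B), src (vid x) = x
  tgt_vid : ∀ {A B : Obj} (x : Hom A B), tgt (vid x) = x
  src_vcomp : ∀ {A B : Obj} (α β : Trk A B), src α = tgt β → src (vcomp α β) = src β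
  tgt_vcomp : ∀ {A B : Obj} (α β : Trk A B), src α = tgt β → tgt (vcomp α β) = tgt α
  vcomp_assoc : ∀ {A B : Obj} (α β γ : Trk A B), src α = tgt β → src β = tgt γ →
    vcomp (vcomp α β) γ = vcomp α (vcomp β γ)
  vcomp_vid : ∀ {A B : Obj} (α : Trk A B), vcomp α (vid (src α)) = α
  vid_vcomp : ∀ {A B : Obj} (α : Trk A B), vcomp (vid (tgt α)) α = α
  src_vinv : ∀ {A B : Obj} (α : Trk A B), src (vinv α) = tgt α
  tgt_vinv : ∀ {A B : Obj} (α : Trk A B), tgt (vinv α) = src α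
  vcomp_vinv : ∀ {A B : Obj} (α : Trk A B), vcomp α (vinv α) = vid (tgt α)
  vinv_vcomp : ∀ {A B : Obj} (α : Trk A B), vcomp (vinv α) α = vid (src α)
  -- each hom-groupoid is an abelian group object: the structure maps are additive
  src_add : ∀ {A B : Obj} (α β : Trk A B), src (α + β) = src α + src β
  tgt_add : ∀ {A B : Obj} (α β : Trk A B), tgt (α + β) = tgt α + tgt β
  vid_add : ∀ {A B : Obj} (x y : Hom A B), vid (x + y) = vid x + vid y
  interchange : ∀ {A B : Obj} (α α' β β' : Trk A B), src α = tgt β → src α' = tgt β' →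
    vcomp (α + α') (β + β') = vcomp α β + vcomp α' β'
  -- underlying category
  comp_assoc : ∀ {A B C D : Obj} (a : Hom C D) (b : Hom B C) (c : Hom A B),
    comp (comp a b) c = comp a (comp b c)
  one_comp : ∀ {A B : Obj} (x : Hom A B), comp (one B) x = x
  comp_one : ∀ {A B : Obj} (x : Hom A B), comp x (one A) = x
  -- whiskering axioms
  src_wl : ∀ {A B C : Obj} (a : Hom B C) (α : Trk A B), src (wl a α) = comp a (src α)
  tgt_wl : ∀ {A B C : Obj} (a : Hom B C) (α : Trk A B), tgt (wl a α) = comp a (tgt α)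
  src_wr : ∀ {A B C : Obj} (α : Trk B C) (x : Hom A B), src (wr α x) = comp (src α) x
  tgt_wr : ∀ {A B C : Obj} (α : Trk B C) (x : Hom A B), tgt (wr α x) = comp (tgt α) x
  wl_vid : ∀ {A B C : Obj} (a : Hom B C) (x : Hom A B), wl a (vid x) = vid (comp a x)
  wr_vid : ∀ {A B C : Obj} (a : Hom B C) (x : Hom A B), wr (vid a) x = vid (comp a x)
  wl_vcomp : ∀ {A B C : Obj} (a : Hom B C) (α β : Trk A B), src α = tgt β →
    wl a (vcomp α β) = vcomp (wl a α) (wl a β)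
  wr_vcomp : ∀ {A B C : Obj} (α β : Trk B C) (x : Hom A B), src α = tgt β →
    wr (vcomp α β) x = vcomp (wr α x) (wr β x)
  wl_wl : ∀ {A B C D : Obj} (a : Hom C D) (b : Hom B C) (α : Trk A B),
    wl a (wl b α) = wl (comp a b) α
  wr_wr : ∀ {A B C D : Obj} (α : Trk C D) (x : Hom B C) (y : Hom A B),
    wr (wr α x) y = wr α (comp x y)
  wl_wr : ∀ {A B C D : Obj} (a : Hom C D) (α : Trk B C) (x : Hom A B),
    wr (wl a α) x = wl a (wr α x)
  wl_one : ∀ {A B : Obj} (α : Trk A B), wl (one B) α = α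
  wr_one : ∀ {A B : Obj} (α : Trk A B), wr α (one A) = α
  -- the two factorizations of the horizontal composite of two tracks agree
  htw : ∀ {A B C : Obj} (α : Trk B C) (β : Trk A B),
    vcomp (wr α (tgt β)) (wl (src α) β) = vcomp (wl (tgt α) β) (wr α (src β))
  -- composition is strictly left linear
  comp_add_left : ∀ {A B C : Obj} (a a' : Hom B C) (x : Hom A B),
    comp (a + a') x = comp a x + comp a' x
  wl_add_left : ∀ {A B C : Obj} (a a' : Hom B C) (α : Trk A B),
    wl (a + a') α = wl a α + wl a' α
  wr_add_left : ∀ {A B C : Obj} (α α' : Trk B C) (x : Hom A B),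
    wr (α + α') x = wr α x + wr α' x
  -- pointedness
  comp_zero : ∀ {A B C : Obj} (a : Hom B C), comp a (0 : Hom A B) = 0
  wl_zero : ∀ {A B C : Obj} (a : Hom B C), wl a (0 : Trk A B) = 0
  wr_zero : ∀ {A B C : Obj} (α : Trk B C), wr α (0 : Hom A B) = vid 0

/-- A system of linearity tracks `Γ a x y : a(x+y) ⇒ ax + ay` satisfying the
linearity track equations of Definition 3.3 (precomposition, postcomposition,
symmetry, left linearity, associativity, and naturality in both variables). -/
structure LinTracks {Obj : Type u} {Hom : Obj → Obj → Type v} {Trk : Obj → Obj → Type w}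
    [∀ A B : Obj, AddCommGroup (Hom A B)] [∀ A B : Obj, AddCommGroup (Trk A B)]
    (T : LLTrackCat Obj Hom Trk) where
  Γ : ∀ {X A B : Obj}, Hom A B → Hom X A → Hom X A → Trk X B
  src_Γ : ∀ {X A B : Obj} (a : Hom A B) (x y : Hom X A),
    T.src (Γ a x y) = T.comp a (x + y)
  tgt_Γ : ∀ {X A B : Obj} (a : Hom A B) (x y : Hom X A),
    T.tgt (Γ a x y) = T.comp a x + T.comp a y
  precomp : ∀ {Y X A B : Obj} (a : Hom A B) (x y : Hom X A) (z : Hom Y X),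
    Γ a (T.comp x z) (T.comp y z) = T.wr (Γ a x y) z
  postcomp : ∀ {X A B C : Obj} (b : Hom B C) (a : Hom A B) (x y : Hom X A),
    Γ (T.comp b a) x y = T.vcomp (Γ b (T.comp a x) (T.comp a y)) (T.wl b (Γ a x y))
  symm : ∀ {X A B : Obj} (a : Hom A B) (x y : Hom X A), Γ a x y = Γ a y x
  leftlin : ∀ {X A B : Obj} (a a' : Hom A B) (x y : Hom X A),
    Γ (a + a') x y = Γ a x y + Γ a' x y
  assocΓ : ∀ {X A B : Obj} (a : Hom A B) (x y z : Hom X A),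
    T.vcomp (Γ a x y + T.vid (T.comp a z)) (Γ a (x + y) z)
      = T.vcomp (T.vid (T.comp a x) + Γ a y z) (Γ a x (y + z))
  natxy : ∀ {X A B : Obj} (a : Hom A B) (G H : Trk X A),
    T.vcomp (T.wl a G + T.wl a H) (Γ a (T.src G) (T.src H))
      = T.vcomp (Γ a (T.tgt G) (T.tgt H)) (T.wl a (G + H))
  nata : ∀ {X A B : Obj} (α : Trk A B) (x y : Hom X A),
    T.vcomp (T.wr α x + T.wr α y) (Γ (T.src α) x y)
      = T.vcomp (Γ (T.tgt α) x y) (T.wr α (x + y))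

/-- The iterated linearity track `Γ(n)_a = Γ_a^{1,…,1} : a(n·1) ⇒ n·a`
(with `n` copies of the identity), defined inductively by
`Γ_a^{x₁,…,xₙ} = (Γ_a^{x₁,…,x_{n-1}} + a xₙ) ∘ Γ_a^{x₁+⋯+x_{n-1},xₙ}`,
with `Γ_a^{x₁} = id` (and `Γ(0)_a = id₀`). -/
def GN {Obj : Type u} {Hom : Obj → Obj → Type v} {Trk : Obj → Obj → Type w}
    [∀ A B : Obj, AddCommGroup (Hom A B)] [∀ A B : Obj, AddCommGroup (Trk A B)]
    (T : LLTrackCat Obj Hom Trk) (L : LinTracks T)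
    {A B : Obj} (a : Hom A B) : ℕ → Trk A B
  | 0 => T.vid 0
  | 1 => T.vid a
  | (n + 2) =>
      T.vcomp (GN T L a (n + 1) + T.vid (T.comp a (T.one A)))
        (L.Γ a ((n + 1) • T.one A) (T.one A))

/-! Splitting the `m·n` copies of `1_A` into `m` blocks of `n` turns `Γ(mn)_a` into the
track on the blocks, `Γ(m)_a (n·1_A)`, followed by the sum of the `m` block tracks, each
equal to `Γ(n)_a`.  The block decomposition `Γ(p+q)_a = (Γ(p)_a + Γ(q)_a) ∘ Γ_a^{p·1,q·1}`
comes from the associativity equation for `Γ`; the theorem then follows by induction on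
`m`, using the precomposition equation to identify the whiskered `Γ_a^{m·1,1} (n·1_A)`
with `Γ_a^{mn·1,n·1}`. -/

namespace LLTrackCat

variable {Obj : Type u} {Hom : Obj → Obj → Type v} {Trk : Obj → Obj → Type w}
  [∀ A B : Obj, AddCommGroup (Hom A B)] [∀ A B : Obj, AddCommGroup (Trk A B)]
  (T : LLTrackCat Obj Hom Trk)

lemma comp_nsmul_left {A B C : Obj} (m : ℕ) (b : Hom B C) (x : Hom A B) :
    T.comp (m • b) x = m • T.comp b x :=
  (AddMonoidHom.mk' (T.comp · x) (T.comp_add_left · · x)).map_nsmul m b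

lemma comp_nsmul_one {A B : Obj} (m : ℕ) (x : Hom A B) : T.comp (m • T.one B) x = m • x := by
  rw [comp_nsmul_left, one_comp]

lemma wl_nsmul_one {A B : Obj} (m : ℕ) (α : Trk A B) : T.wl (m • T.one B) α = m • α := by
  have h := (AddMonoidHom.mk' (T.wl · α) (T.wl_add_left · · α)).map_nsmul m (T.one B)
  simpa only [AddMonoidHom.mk'_apply, wl_one] using h

lemma src_nsmul {A B : Obj} (m : ℕ) (α : Trk A B) : T.src (m • α) = m • T.src α :=
  (AddMonoidHom.mk' T.src T.src_add).map_nsmul m α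

lemma vcomp_vid_of_src_eq {A B : Obj} {α : Trk A B} {x : Hom A B} (h : T.src α = x) :
    T.vcomp α (T.vid x) = α :=
  h ▸ T.vcomp_vid α

lemma vcomp_add_right {A B : Obj} {α β : Trk A B} (γ : Trk A B) (h : T.src α = T.tgt β) :
    T.vcomp α β + γ = T.vcomp (α + γ) (β + T.vid (T.src γ)) := by
  rw [T.interchange α γ β _ h (T.tgt_vid _).symm, T.vcomp_vid]

end LLTrackCat

section IteratedLinearityTrack

variable {Obj : Type u} {Hom : Obj → Obj → Type v} {Trk : Obj → Obj → Type w}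
  [∀ A B : Obj, AddCommGroup (Hom A B)] [∀ A B : Obj, AddCommGroup (Trk A B)]
  (T : LLTrackCat Obj Hom Trk) (L : LinTracks T)

lemma GN_succ {A B : Obj} (a : Hom A B) {n : ℕ} (hn : 1 ≤ n) :
    GN T L a (n + 1) = T.vcomp (GN T L a n + T.vid (T.comp a (T.one A)))
      (L.Γ a (n • T.one A) (T.one A)) := by
  obtain ⟨k, rfl⟩ := Nat.exists_eq_add_of_le' hn
  rfl

lemma src_GN {A B : Obj} (a : Hom A B) : ∀ n : ℕ, T.src (GN T L a n) = T.comp a (n • T.one A)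
  | 0 => by rw [GN, T.src_vid, zero_nsmul, T.comp_zero]
  | 1 => by rw [GN, T.src_vid, one_nsmul, T.comp_one]
  | n + 2 => by
    rw [GN, T.src_vcomp _ _ (by rw [T.src_add, src_GN a (n + 1), T.src_vid, L.tgt_Γ]),
      L.src_Γ, ← succ_nsmul]

lemma tgt_GN {A B : Obj} (a : Hom A B) : ∀ n : ℕ, T.tgt (GN T L a n) = n • a
  | 0 => by rw [GN, T.tgt_vid, zero_nsmul]
  | 1 => by rw [GN, T.tgt_vid, one_nsmul]
  | n + 2 => by
    rw [GN, T.tgt_vcomp _ _ (by rw [T.src_add, src_GN, T.src_vid, L.tgt_Γ]),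
      T.tgt_add, tgt_GN a (n + 1), T.tgt_vid, T.comp_one, ← succ_nsmul]

lemma GN_add {A B : Obj} (a : Hom A B) {p q : ℕ} (hp : 1 ≤ p) (hq : 1 ≤ q) :
    GN T L a (p + q) = T.vcomp (GN T L a p + GN T L a q)
      (L.Γ a (p • T.one A) (q • T.one A)) := by
  induction q, hq using Nat.le_induction with
  | base => rw [GN_succ T L a hp, one_nsmul, GN, T.comp_one]
  | succ q hq ih =>
    set e := T.comp a (T.one A)
    calc GN T L a (p + (q + 1))
        = T.vcomp (T.vcomp (GN T L a p + GN T L a q) (L.Γ a (p • T.one A) (q • T.one A))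
            + T.vid e) (L.Γ a (p • T.one A + q • T.one A) (T.one A)) := by
          rw [← add_assoc, GN_succ T L a (by omega), ih, add_nsmul]
      _ = T.vcomp (GN T L a p + GN T L a q + T.vid e)
            (T.vcomp (L.Γ a (p • T.one A) (q • T.one A) + T.vid e)
              (L.Γ a (p • T.one A + q • T.one A) (T.one A))) := by
          rw [T.vcomp_add_right _ (by rw [T.src_add, src_GN, src_GN, L.tgt_Γ]), T.src_vid,
            T.vcomp_assoc _ _ _ (by simp only [T.src_add, T.tgt_add, T.src_vid, T.tgt_vid,
              src_GN, L.tgt_Γ]) (by rw [T.src_add, T.src_vid, L.src_Γ, L.tgt_Γ])]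
      _ = T.vcomp (GN T L a p + GN T L a q + T.vid e)
            (T.vcomp (T.vid (T.comp a (p • T.one A)) + L.Γ a (q • T.one A) (T.one A))
              (L.Γ a (p • T.one A) (q • T.one A + T.one A))) := by
          rw [L.assocΓ]
      _ = T.vcomp (GN T L a p + GN T L a (q + 1)) (L.Γ a (p • T.one A) ((q + 1) • T.one A)) := by
          rw [← T.vcomp_assoc _ _ _ (by simp only [T.src_add, T.tgt_add, T.src_vid,
              T.tgt_vid, src_GN, L.tgt_Γ]; abel) (by rw [T.src_add, T.src_vid, L.src_Γ, L.tgt_Γ]),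
            add_assoc, T.interchange _ _ _ _ (by rw [src_GN, T.tgt_vid])
              (by rw [T.src_add, src_GN, T.src_vid, L.tgt_Γ]),
            T.vcomp_vid_of_src_eq (src_GN T L a p), ← GN_succ T L a hq, succ_nsmul]

lemma wr_GN_succ {A B : Obj} (a : Hom A B) {m : ℕ} (hm : 1 ≤ m) (n : ℕ) :
    T.wr (GN T L a (m + 1)) (n • T.one A)
      = T.vcomp (T.wr (GN T L a m) (n • T.one A) + T.vid (T.comp a (n • T.one A)))
          (L.Γ a ((m * n) • T.one A) (n • T.one A)) := by
  rw [GN_succ T L a hm, T.wr_vcomp _ _ _ (by rw [T.src_add, src_GN, T.src_vid, L.tgt_Γ]),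
    T.wr_add_left, T.wr_vid, T.comp_one, ← L.precomp, T.comp_nsmul_one, T.one_comp, smul_smul]

/-- For all `m, n ≥ 1` and any morphism `a : A → B`,
`Γ(mn)_a = (m·1_B) Γ(n)_a ∘ Γ(m)_a (n·1_A)`. -/
theorem stmt6 {Obj : Type u} {Hom : Obj → Obj → Type v} {Trk : Obj → Obj → Type w}
    [∀ A B : Obj, AddCommGroup (Hom A B)] [∀ A B : Obj, AddCommGroup (Trk A B)]
    (T : LLTrackCat Obj Hom Trk) (L : LinTracks T)
    {A B : Obj} (a : Hom A B) (m n : ℕ) (hm : 1 ≤ m) (hn : 1 ≤ n) :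
    GN T L a (m * n)
      = T.vcomp (T.wl (m • T.one B) (GN T L a n)) (T.wr (GN T L a m) (n • T.one A)) := by
  rw [T.wl_nsmul_one]
  induction m, hm using Nat.le_induction with
  | base => rw [one_mul, one_nsmul, GN, T.wr_vid, T.vcomp_vid_of_src_eq (src_GN T L a n)]
  | succ m hm ih =>
    have hmn : 1 ≤ m * n := Nat.one_le_iff_ne_zero.mpr (by positivity)
    rw [add_one_mul, GN_add T L a hmn hn, ih,
      T.vcomp_add_right _ (by rw [T.src_nsmul, src_GN, T.tgt_wr, tgt_GN, T.comp_nsmul_left]),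
      src_GN, T.vcomp_assoc _ _ _
        (by simp only [T.src_add, T.src_nsmul, src_GN, T.tgt_add, T.tgt_wr, tgt_GN,
          T.comp_nsmul_left, T.tgt_vid])
        (by rw [T.src_add, T.src_wr, src_GN, T.src_vid, L.tgt_Γ, T.comp_assoc,
          T.comp_nsmul_one, smul_smul]), ← wr_GN_succ T L a hm, succ_nsmul]

end IteratedLinearityTrack
end

section
/- Let (s, Γ) : B₀ → T be a pointed pseudo-functor, and let B₁ be the set of pairs (a, x) with x a morphism of B₀ and a a track in T with δ₀ a = sx and δ₁ a = 0. With the actions y ⊗ (a,x) = (y • a, yx) and (a,x) ⊗ y = (a • y, xy), and boundary d(a,x) = x, the Leibniz rule holds: for (a,x), (b,y) ∈ B₁, (d(a,x)) ⊗ (b,y) = (a,x) ⊗ (d(b,y)), i.e. x • b = a • y in T. -/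
/-! A *pointed track category*: a category enriched in pointed groupoids with the
smash product.  Tracks are encoded non-dependently with source `src = δ₀` and
target `tgt = δ₁`; `vcomp α β` is the vertical composite `α □ β` (first `β`, then
`α`); `wl a β = a ⊗ β` and `wr α x = α ⊗ x` are the whiskerings. -/
structure PtdTrackCat (Obj : Type u) (Hom : Obj → Obj → Type v) (Trk : Obj → Obj → Type w)
    [∀ A B : Obj, Zero (Hom A B)] where
  src : ∀ {A B : Obj}, Trk A B → Hom A B
  tgt : ∀ {A B : Obj}, Trk A B → Hom A B
  vid : ∀ {A B : Obj}, Hom A B → Trk A B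
  vcomp : ∀ {A B : Obj}, Trk A B → Trk A B → Trk A B
  vinv : ∀ {A B : Obj}, Trk A B → Trk A B
  one : ∀ A : Obj, Hom A A
  comp : ∀ {A B C : Obj}, Hom B C → Hom A B → Hom A C
  wl : ∀ {A B C : Obj}, Hom B C → Trk A B → Trk A C
  wr : ∀ {A B C : Obj}, Trk B C → Hom A B → Trk A C
  -- each hom-groupoid is a groupoid
  src_vid : ∀ {A B : Obj} (x : Hom A B), src (vid x) = x
  tgt_vid : ∀ {A B : Obj} (x : Hom A B), tgt (vid x) = x
  src_vcomp : ∀ {A B : Obj} (α β : Trk A B), src α = tgt β → src (vcomp α β) = src β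
  tgt_vcomp : ∀ {A B : Obj} (α β : Trk A B), src α = tgt β → tgt (vcomp α β) = tgt α
  vcomp_assoc : ∀ {A B : Obj} (α β γ : Trk A B), src α = tgt β → src β = tgt γ →
    vcomp (vcomp α β) γ = vcomp α (vcomp β γ)
  vcomp_vid : ∀ {A B : Obj} (α : Trk A B), vcomp α (vid (src α)) = α
  vid_vcomp : ∀ {A B : Obj} (α : Trk A B), vcomp (vid (tgt α)) α = α
  src_vinv : ∀ {A B : Obj} (α : Trk A B), src (vinv α) = tgt α
  tgt_vinv : ∀ {A B : Obj} (α : Trk A B), tgt (vinv α) = src α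
  vcomp_vinv : ∀ {A B : Obj} (α : Trk A B), vcomp α (vinv α) = vid (tgt α)
  vinv_vcomp : ∀ {A B : Obj} (α : Trk A B), vcomp (vinv α) α = vid (src α)
  -- underlying category
  comp_assoc : ∀ {A B C D : Obj} (a : Hom C D) (b : Hom B C) (c : Hom A B),
    comp (comp a b) c = comp a (comp b c)
  one_comp : ∀ {A B : Obj} (x : Hom A B), comp (one B) x = x
  comp_one : ∀ {A B : Obj} (x : Hom A B), comp x (one A) = x
  -- whiskering axioms
  src_wl : ∀ {A B C : Obj} (a : Hom B C) (α : Trk A B), src (wl a α) = comp a (src α)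
  tgt_wl : ∀ {A B C : Obj} (a : Hom B C) (α : Trk A B), tgt (wl a α) = comp a (tgt α)
  src_wr : ∀ {A B C : Obj} (α : Trk B C) (x : Hom A B), src (wr α x) = comp (src α) x
  tgt_wr : ∀ {A B C : Obj} (α : Trk B C) (x : Hom A B), tgt (wr α x) = comp (tgt α) x
  wl_vid : ∀ {A B C : Obj} (a : Hom B C) (x : Hom A B), wl a (vid x) = vid (comp a x)
  wr_vid : ∀ {A B C : Obj} (a : Hom B C) (x : Hom A B), wr (vid a) x = vid (comp a x)
  wl_vcomp : ∀ {A B C : Obj} (a : Hom B C) (α β : Trk A B), src α = tgt β →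
    wl a (vcomp α β) = vcomp (wl a α) (wl a β)
  wr_vcomp : ∀ {A B C : Obj} (α β : Trk B C) (x : Hom A B), src α = tgt β →
    wr (vcomp α β) x = vcomp (wr α x) (wr β x)
  wl_vinv : ∀ {A B C : Obj} (a : Hom B C) (α : Trk A B), wl a (vinv α) = vinv (wl a α)
  wr_vinv : ∀ {A B C : Obj} (α : Trk B C) (x : Hom A B), wr (vinv α) x = vinv (wr α x)
  wl_wl : ∀ {A B C D : Obj} (a : Hom C D) (b : Hom B C) (α : Trk A B),
    wl a (wl b α) = wl (comp a b) α
  wr_wr : ∀ {A B C D : Obj} (α : Trk C D) (x : Hom B C) (y : Hom A B),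
    wr (wr α x) y = wr α (comp x y)
  wl_wr : ∀ {A B C D : Obj} (a : Hom C D) (α : Trk B C) (x : Hom A B),
    wr (wl a α) x = wl a (wr α x)
  wl_one : ∀ {A B : Obj} (α : Trk A B), wl (one B) α = α
  wr_one : ∀ {A B : Obj} (α : Trk A B), wr α (one A) = α
  -- the two factorizations of the horizontal composite of two tracks agree
  htw : ∀ {A B C : Obj} (α : Trk B C) (β : Trk A B),
    vcomp (wr α (tgt β)) (wl (src α) β) = vcomp (wl (tgt α) β) (wr α (src β))
  -- pointedness
  zero_comp : ∀ {A B C : Obj} (x : Hom A B), comp (0 : Hom B C) x = 0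
  comp_zero : ∀ {A B C : Obj} (a : Hom B C), comp a (0 : Hom A B) = 0
  wl_zero : ∀ {A B C : Obj} (β : Trk A B), wl (0 : Hom B C) β = vid 0
  wr_zero : ∀ {A B C : Obj} (α : Trk B C), wr α (0 : Hom A B) = vid 0

/-- A small pointed category (the source `B₀` of the pseudo-functor):
`comp x y` denotes the composite "`x` after `y`". -/
structure PtdCat (O : Type u') (H : O → O → Type v') [∀ A B : O, Zero (H A B)] where
  one : ∀ A : O, H A A
  comp : ∀ {A B C : O}, H B C → H A B → H A C
  comp_assoc : ∀ {A B C D : O} (x : H C D) (y : H B C) (z : H A B),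
    comp (comp x y) z = comp x (comp y z)
  one_comp : ∀ {A B : O} (x : H A B), comp (one B) x = x
  comp_one : ∀ {A B : O} (x : H A B), comp x (one A) = x
  comp_zero : ∀ {A B C : O} (x : H B C), comp x (0 : H A B) = 0
  zero_comp : ∀ {A B C : O} (x : H A B), comp (0 : H B C) x = 0

/-- A *pointed pseudo-functor* `(s, Γ) : B₀ → T` from a pointed category to a
pointed track category: coherence tracks `Γ x y : (sx)(sy) ⇒ s(xy)` satisfying
the cocycle condition and the strict unit conditions, together with
pointedness `s(0) = 0`, `Γ(x,0) = Γ(0,y) = id₀`. -/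
structure PtdPseudoFunctor {O : Type u'} {H : O → O → Type v'} [∀ A B : O, Zero (H A B)]
    {Obj : Type u} {Hom : Obj → Obj → Type v} {Trk : Obj → Obj → Type w}
    [∀ A B : Obj, Zero (Hom A B)]
    (B : PtdCat O H) (T : PtdTrackCat Obj Hom Trk) where
  obj : O → Obj
  map : ∀ {A B' : O}, H A B' → Hom (obj A) (obj B')
  Γ : ∀ {A B' C : O}, H B' C → H A B' → Trk (obj A) (obj C)
  src_Γ : ∀ {A B' C : O} (x : H B' C) (y : H A B'),
    T.src (Γ x y) = T.comp (map x) (map y)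
  tgt_Γ : ∀ {A B' C : O} (x : H B' C) (y : H A B'),
    T.tgt (Γ x y) = map (B.comp x y)
  cocycle : ∀ {A B' C D : O} (x : H C D) (y : H B' C) (z : H A B'),
    T.vcomp (Γ (B.comp x y) z) (T.wr (Γ x y) (map z))
      = T.vcomp (Γ x (B.comp y z)) (T.wl (map x) (Γ y z))
  map_one : ∀ A : O, map (B.one A) = T.one (obj A)
  Γ_one_left : ∀ {A B' : O} (x : H A B'), Γ (B.one B') x = T.vid (map x)
  Γ_one_right : ∀ {A B' : O} (x : H A B'), Γ x (B.one A) = T.vid (map x)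
  map_zero : ∀ {A B' : O}, map (0 : H A B') = 0
  Γ_zero_right : ∀ {A B' C : O} (x : H B' C), Γ x (0 : H A B') = T.vid 0
  Γ_zero_left : ∀ {A B' C : O} (y : H A B'), Γ (0 : H B' C) y = T.vid 0

/-- For `(a, x), (b, y) ∈ B₁` (tracks `a : sx ⇒ 0`,
`b : sy ⇒ 0`), with boundary `d(a,x) = x` and actions `y • a := (sy ⊗ a) ∘ Γ(y,x)⁻¹`,
`a • y := (a ⊗ sy) ∘ Γ(x,y)⁻¹`, the Leibniz rule
`(d(a,x)) ⊗ (b,y) = (a,x) ⊗ (d(b,y))` holds, i.e. `x • b = a • y` in `T`. -/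
theorem stmt12 {O : Type u'} {H : O → O → Type v'} [∀ A B : O, Zero (H A B)]
    {Obj : Type u} {Hom : Obj → Obj → Type v} {Trk : Obj → Obj → Type w}
    [∀ A B : Obj, Zero (Hom A B)]
    (B : PtdCat O H) (T : PtdTrackCat Obj Hom Trk) (S : PtdPseudoFunctor B T)
    {A₂ A₁ A₀ : O} (x : H A₁ A₀) (y : H A₂ A₁)
    (a : Trk (S.obj A₁) (S.obj A₀)) (ha₀ : T.src a = S.map x) (ha₁ : T.tgt a = 0)
    (b : Trk (S.obj A₂) (S.obj A₁)) (hb₀ : T.src b = S.map y) (hb₁ : T.tgt b = 0) :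
    T.vcomp (T.wl (S.map x) b) (T.vinv (S.Γ x y))
      = T.vcomp (T.wr a (S.map y)) (T.vinv (S.Γ x y)) := by
  have h := T.htw a b
  rw [hb₁, T.wr_zero, ha₁, T.wl_zero] at h
  have h1 : T.tgt (T.wl (T.src a) b) = 0 := by rw [T.tgt_wl, hb₁, T.comp_zero]
  have h2 : T.tgt (T.wr a (T.src b)) = 0 := by rw [T.tgt_wr, ha₁, T.zero_comp]
  have e1 : T.vcomp (T.vid 0) (T.wl (T.src a) b) = T.wl (T.src a) b := by
    rw [← h1]; exact T.vid_vcomp _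
  have e2 : T.vcomp (T.vid 0) (T.wr a (T.src b)) = T.wr a (T.src b) := by
    rw [← h2]; exact T.vid_vcomp _
  have key : T.wl (S.map x) b = T.wr a (S.map y) := by
    rw [← ha₀, ← hb₀, ← e1, ← e2]; exact h
  rw [key]
end

section
/- Let (s, Γ) : S → T be a pointed pseudo-functor between pointed track categories, x₁, x₂, x₃ composable degree-0 morphisms in S with tracks a : x₁x₂ ⇒ 0 and b : x₂x₃ ⇒ 0. Set a' := sa ∘ Γ(x₁,x₂) and b' := sb ∘ Γ(x₂,x₃) in T. Then s((a ⊗ x₃) ∘ (x₁ ⊗ b)⁻¹) = (a' ⊗ sx₃) ∘ ((sx₁) ⊗ b')⁻¹, i.e. s sends Toda bracket representatives to Toda bracket representatives. -/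
/-- A *pointed pseudo-functor* `(s, Γ) : S → T` between pointed track categories:
`s` acts on objects, morphisms and tracks (a functor on each hom-groupoid),
with coherence tracks `Γ x y : (sx)(sy) ⇒ s(xy)` satisfying the cocycle and
strict unit conditions, naturality in both variables, and pointedness. -/
structure TrkPseudoFunctor {O : Type u'} {H : O → O → Type v'} {K : O → O → Type w'}
    [∀ A B : O, Zero (H A B)]
    {Obj : Type u} {Hom : Obj → Obj → Type v} {Trk : Obj → Obj → Type w}
    [∀ A B : Obj, Zero (Hom A B)]
    (S : PtdTrackCat O H K) (T : PtdTrackCat Obj Hom Trk) where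
  obj : O → Obj
  map : ∀ {A B' : O}, H A B' → Hom (obj A) (obj B')
  tmap : ∀ {A B' : O}, K A B' → Trk (obj A) (obj B')
  src_tmap : ∀ {A B' : O} (α : K A B'), T.src (tmap α) = map (S.src α)
  tgt_tmap : ∀ {A B' : O} (α : K A B'), T.tgt (tmap α) = map (S.tgt α)
  tmap_vid : ∀ {A B' : O} (x : H A B'), tmap (S.vid x) = T.vid (map x)
  tmap_vcomp : ∀ {A B' : O} (α β : K A B'), S.src α = S.tgt β →
    tmap (S.vcomp α β) = T.vcomp (tmap α) (tmap β)
  tmap_vinv : ∀ {A B' : O} (α : K A B'), tmap (S.vinv α) = T.vinv (tmap α)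
  Γ : ∀ {A B' C : O}, H B' C → H A B' → Trk (obj A) (obj C)
  src_Γ : ∀ {A B' C : O} (x : H B' C) (y : H A B'),
    T.src (Γ x y) = T.comp (map x) (map y)
  tgt_Γ : ∀ {A B' C : O} (x : H B' C) (y : H A B'),
    T.tgt (Γ x y) = map (S.comp x y)
  cocycle : ∀ {A B' C D : O} (x : H C D) (y : H B' C) (z : H A B'),
    T.vcomp (Γ (S.comp x y) z) (T.wr (Γ x y) (map z))
      = T.vcomp (Γ x (S.comp y z)) (T.wl (map x) (Γ y z))
  map_one : ∀ A : O, map (S.one A) = T.one (obj A)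
  Γ_one_left : ∀ {A B' : O} (x : H A B'), Γ (S.one B') x = T.vid (map x)
  Γ_one_right : ∀ {A B' : O} (x : H A B'), Γ x (S.one A) = T.vid (map x)
  map_zero : ∀ {A B' : O}, map (0 : H A B') = 0
  Γ_zero_right : ∀ {A B' C : O} (x : H B' C), Γ x (0 : H A B') = T.vid 0
  Γ_zero_left : ∀ {A B' C : O} (y : H A B'), Γ (0 : H B' C) y = T.vid 0
  -- Γ is natural in each variable
  natL : ∀ {A B' C : O} (α : K B' C) (y : H A B'),
    T.vcomp (tmap (S.wr α y)) (Γ (S.src α) y)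
      = T.vcomp (Γ (S.tgt α) y) (T.wr (tmap α) (map y))
  natR : ∀ {A B' C : O} (x : H B' C) (β : K A B'),
    T.vcomp (tmap (S.wl x β)) (Γ x (S.src β))
      = T.vcomp (Γ x (S.tgt β)) (T.wl (map x) (tmap β))

namespace PtdTrackCat

variable {Obj : Type u} {Hom : Obj → Obj → Type v} {Trk : Obj → Obj → Type w}
  [∀ A B : Obj, Zero (Hom A B)] (T : PtdTrackCat Obj Hom Trk)

theorem eq_vinv {A B : Obj} (α γ : Trk A B) (h1 : T.src γ = T.tgt α)
    (h2 : T.vcomp γ α = T.vid (T.src α)) : γ = T.vinv α := by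
  calc γ = T.vcomp γ (T.vid (T.src γ)) := (T.vcomp_vid γ).symm
    _ = T.vcomp γ (T.vcomp α (T.vinv α)) := by rw [h1, T.vcomp_vinv]
    _ = T.vcomp (T.vcomp γ α) (T.vinv α) :=
        (T.vcomp_assoc γ α (T.vinv α) h1 (T.tgt_vinv α).symm).symm
    _ = T.vcomp (T.vid (T.tgt (T.vinv α))) (T.vinv α) := by rw [h2, T.tgt_vinv]
    _ = T.vinv α := T.vid_vcomp _

theorem vinv_vcomp_eq {A B : Obj} (α β : Trk A B) (h : T.src α = T.tgt β) :
    T.vinv (T.vcomp α β) = T.vcomp (T.vinv β) (T.vinv α) := by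
  have hs : T.src (T.vinv β) = T.tgt (T.vinv α) := by
    rw [T.src_vinv, T.tgt_vinv, h]
  symm
  apply T.eq_vinv
  · rw [T.src_vcomp _ _ hs, T.src_vinv, T.tgt_vcomp _ _ h]
  · calc T.vcomp (T.vcomp (T.vinv β) (T.vinv α)) (T.vcomp α β)
        = T.vcomp (T.vinv β) (T.vcomp (T.vinv α) (T.vcomp α β)) := by
          rw [T.vcomp_assoc _ _ _ hs
            (by rw [T.src_vinv, T.tgt_vcomp _ _ h])]
      _ = T.vcomp (T.vinv β) (T.vcomp (T.vcomp (T.vinv α) α) β) := by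
          rw [T.vcomp_assoc _ α β (by rw [T.src_vinv]) h]
      _ = T.vcomp (T.vinv β) β := by rw [T.vinv_vcomp, h, T.vid_vcomp]
      _ = T.vid (T.src (T.vcomp α β)) := by
          rw [T.vinv_vcomp, T.src_vcomp _ _ h]

theorem cancel_mid {A B : Obj} (γ C δ : Trk A B) (h1 : T.src γ = T.tgt C)
    (h2 : T.tgt C = T.tgt δ) :
    T.vcomp (T.vcomp γ C) (T.vcomp (T.vinv C) δ) = T.vcomp γ δ := by
  have hinv : T.src (T.vinv C) = T.tgt δ := by rw [T.src_vinv, h2]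
  calc T.vcomp (T.vcomp γ C) (T.vcomp (T.vinv C) δ)
      = T.vcomp γ (T.vcomp C (T.vcomp (T.vinv C) δ)) := by
        rw [T.vcomp_assoc γ C _ h1
          (by rw [T.tgt_vcomp _ _ hinv, T.tgt_vinv])]
    _ = T.vcomp γ (T.vcomp (T.vcomp C (T.vinv C)) δ) := by
        rw [T.vcomp_assoc C (T.vinv C) δ (T.tgt_vinv C).symm hinv]
    _ = T.vcomp γ δ := by rw [T.vcomp_vinv, h2, T.vid_vcomp]

end PtdTrackCat

/-- A pointed pseudo-functor sends Toda bracket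
representatives to Toda bracket representatives: with
`a' := sa ∘ Γ(x₁,x₂)` and `b' := sb ∘ Γ(x₂,x₃)`,
`s((a ⊗ x₃) ∘ (x₁ ⊗ b)⁻¹) = (a' ⊗ sx₃) ∘ ((sx₁) ⊗ b')⁻¹`. -/
theorem stmt17 {O : Type u'} {H : O → O → Type v'} {K : O → O → Type w'}
    [∀ A B : O, Zero (H A B)]
    {Obj : Type u} {Hom : Obj → Obj → Type v} {Trk : Obj → Obj → Type w}
    [∀ A B : Obj, Zero (Hom A B)]
    (S : PtdTrackCat O H K) (T : PtdTrackCat Obj Hom Trk) (F : TrkPseudoFunctor S T)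
    {Y₀ Y₁ Y₂ Y₃ : O} (x₁ : H Y₁ Y₀) (x₂ : H Y₂ Y₁) (x₃ : H Y₃ Y₂)
    (a : K Y₂ Y₀) (ha₀ : S.src a = S.comp x₁ x₂) (ha₁ : S.tgt a = 0)
    (b : K Y₃ Y₁) (hb₀ : S.src b = S.comp x₂ x₃) (hb₁ : S.tgt b = 0) :
    F.tmap (S.vcomp (S.wr a x₃) (S.vinv (S.wl x₁ b)))
      = T.vcomp
          (T.wr (T.vcomp (F.tmap a) (F.Γ x₁ x₂)) (F.map x₃))
          (T.vinv (T.wl (F.map x₁) (T.vcomp (F.tmap b) (F.Γ x₂ x₃)))) := by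
  set A := F.tmap a with hA
  set B := F.tmap b with hB
  set m₁ := F.map x₁
  set m₃ := F.map x₃
  set G12 := F.Γ x₁ x₂ with hG12
  set G23 := F.Γ x₂ x₃ with hG23
  set G12_3 := F.Γ (S.comp x₁ x₂) x₃ with hG12_3
  set G1_23 := F.Γ x₁ (S.comp x₂ x₃) with hG1_23
  set α₁ := F.tmap (S.wr a x₃) with hα₁
  set α₂ := F.tmap (S.wl x₁ b) with hα₂
  set C := T.vcomp G1_23 (T.wl m₁ G23) with hC
  -- basic source/target computations
  have hsrcA : T.src A = F.map (S.comp x₁ x₂) := by rw [hA, F.src_tmap, ha₀]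
  have htgtA : T.tgt A = 0 := by rw [hA, F.tgt_tmap, ha₁, F.map_zero]
  have hsrcB : T.src B = F.map (S.comp x₂ x₃) := by rw [hB, F.src_tmap, hb₀]
  have htgtB : T.tgt B = 0 := by rw [hB, F.tgt_tmap, hb₁, F.map_zero]
  have hsα₁ : T.src α₁ = F.map (S.comp (S.comp x₁ x₂) x₃) := by
    rw [hα₁, F.src_tmap, S.src_wr, ha₀]
  have hsα₂ : T.src α₂ = F.map (S.comp x₁ (S.comp x₂ x₃)) := by
    rw [hα₂, F.src_tmap, S.src_wl, hb₀]
  -- E1 : wr A m₃ = α₁ ∘ G12_3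
  have E1 : T.vcomp α₁ G12_3 = T.wr A m₃ := by
    have h := F.natL a x₃
    rw [ha₀, ha₁, F.Γ_zero_left] at h
    rw [hα₁, hG12_3, h]
    have : (0 : Hom _ _) = T.tgt (T.wr A m₃) := by
      rw [T.tgt_wr, htgtA, T.zero_comp]
    rw [this, T.vid_vcomp]
  -- E2 : wl m₁ B = α₂ ∘ G1_23
  have E2 : T.vcomp α₂ G1_23 = T.wl m₁ B := by
    have h := F.natR x₁ b
    rw [hb₀, hb₁, F.Γ_zero_right] at h
    rw [hα₂, hG1_23, h]
    have : (0 : Hom _ _) = T.tgt (T.wl m₁ B) := by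
      rw [T.tgt_wl, htgtB, T.comp_zero]
    rw [this, T.vid_vcomp]
  have hcoc : T.vcomp G12_3 (T.wr G12 m₃) = C := F.cocycle x₁ x₂ x₃
  -- more src/tgt facts
  have htC : T.tgt C = F.map (S.comp x₁ (S.comp x₂ x₃)) := by
    rw [hC, T.tgt_vcomp _ _ ?_, hG1_23, F.tgt_Γ]
    rw [hG1_23, F.src_Γ, T.tgt_wl, hG23, F.tgt_Γ]
  have h1C : T.src α₁ = T.tgt C := by
    rw [hsα₁, htC, S.comp_assoc]
  have h2C : T.tgt C = T.src α₂ := by rw [htC, hsα₂]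
  -- rewrite the LHS
  have hLHS : F.tmap (S.vcomp (S.wr a x₃) (S.vinv (S.wl x₁ b)))
      = T.vcomp α₁ (T.vinv α₂) := by
    rw [F.tmap_vcomp _ _ ?_, F.tmap_vinv]
    rw [S.src_wr, S.tgt_vinv, S.src_wl, ha₀, hb₀, S.comp_assoc]
  rw [hLHS]
  -- rewrite the RHS
  have hwr : T.wr (T.vcomp A G12) m₃ = T.vcomp (T.vcomp α₁ G12_3) (T.wr G12 m₃) := by
    rw [T.wr_vcomp _ _ _ (by rw [hsrcA, hG12, F.tgt_Γ]), E1]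
  have hwl : T.wl m₁ (T.vcomp B G23) = T.vcomp α₂ C := by
    rw [T.wl_vcomp _ _ _ (by rw [hsrcB, hG23, F.tgt_Γ]), ← E2, hC,
      T.vcomp_assoc α₂ G1_23 (T.wl m₁ G23) ?_ ?_]
    · rw [hsα₂, hG1_23, F.tgt_Γ]
    · rw [hG1_23, F.src_Γ, T.tgt_wl, hG23, F.tgt_Γ]
  rw [hwr, hwl, T.vinv_vcomp_eq α₂ C h2C.symm,
    T.vcomp_assoc α₁ G12_3 (T.wr G12 m₃) ?_ ?_, hcoc,
    T.cancel_mid α₁ C (T.vinv α₂) h1C (by rw [T.tgt_vinv, h2C])]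
  · rw [hsα₁, hG12_3, F.tgt_Γ]
  · rw [hG12_3, F.src_Γ, T.tgt_wr, hG12, F.tgt_Γ]
end
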